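/- If a multivalued function F : X ⊸ Y between digital images has strong continuity and F(x) is connected for each x ∈ X, then F is connectivity preserving. -/

import Mathlib

/-- A subset `A` is connected under adjacency `adj`: any two of its points are
joined by a path of consecutively adjacent points lying in `A`. -/
def ConnIn {X : Type*} (adj : X → X → Prop) (A : Set X) : Prop :=
  ∀ a ∈ A, ∀ b ∈ A,
    Relation.ReflTransGen (fun u v => adj u v ∧ u ∈ A ∧ v ∈ A) a b

/-- Two subsets are adjacent if they contain points that are equal or adjacent. -/
def AdjSets {X : Type*} (adj : X → X → Prop) (A B : Set X) : Prop :=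
  ∃ a ∈ A, ∃ b ∈ B, a = b ∨ adj a b

/-- Image of a set under a multivalued function. -/
def imageMV {X Y : Type*} (F : X → Set Y) (A : Set X) : Set Y :=
  ⋃ x ∈ A, F x

/-- A multivalued function is connectivity preserving if images of connected
sets are connected. -/
def ConnPres {X Y : Type*} (adjX : X → X → Prop) (adjY : Y → Y → Prop)
    (F : X → Set Y) : Prop :=
  ∀ A : Set X, ConnIn adjX A → ConnIn adjY (imageMV F A)

/-- `F` has strong continuity. -/
def StrongCont {X Y : Type*} (adjX : X → X → Prop) (adjY : Y → Y → Prop)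
    (F : X → Set Y) : Prop :=
  ∀ x x', adjX x x' →
    (∀ a ∈ F x, ∃ b ∈ F x', a = b ∨ adjY a b) ∧
    (∀ b ∈ F x', ∃ a ∈ F x, b = a ∨ adjY b a)

/-! Connect two points of `F(A)` lying in `F x` and `F x'` by following a path from `x` to `x'`
in `A`: across an edge `c ~ d` strong continuity moves the current point of `F c` to an equal or
adjacent point of `F d`, and inside the last image `F x'` its connectedness finishes the path. -/

open Relation

abbrev adjWithin {X : Type*} (adj : X → X → Prop) (A : Set X) (u v : X) : Prop :=
  adj u v ∧ u ∈ A ∧ v ∈ A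

theorem mem_imageMV {X Y : Type*} {F : X → Set Y} {A : Set X} {y : Y} :
    y ∈ imageMV F A ↔ ∃ x ∈ A, y ∈ F x := by
  simp only [imageMV, Set.mem_iUnion, exists_prop]

theorem subset_imageMV {X Y : Type*} {F : X → Set Y} {A : Set X} {x : X} (hx : x ∈ A) :
    F x ⊆ imageMV F A :=
  fun _ hy => mem_imageMV.2 ⟨x, hx, hy⟩

theorem ConnIn.reflTransGen_of_subset {X : Type*} {adj : X → X → Prop} {A B : Set X}
    (hA : ConnIn adj A) (hAB : A ⊆ B) {a b : X} (ha : a ∈ A) (hb : b ∈ A) :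
    ReflTransGen (adjWithin adj B) a b :=
  ReflTransGen.mono (fun _ _ ⟨huv, hu, hv⟩ => ⟨huv, hAB hu, hAB hv⟩) _ _ (hA a ha b hb)

theorem StrongCont.reflTransGen_imageMV {X Y : Type*} {adjX : X → X → Prop}
    {adjY : Y → Y → Prop} {F : X → Set Y} (hstrong : StrongCont adjX adjY F)
    (hconn : ∀ x, ConnIn adjY (F x)) {A : Set X} {x x' : X}
    (hpath : ReflTransGen (adjWithin adjX A) x x') (hx' : x' ∈ A) {p q : Y}
    (hp : p ∈ F x) (hq : q ∈ F x') :
    ReflTransGen (adjWithin adjY (imageMV F A)) p q := by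
  induction hpath using ReflTransGen.head_induction_on generalizing p with
  | refl => exact (hconn x').reflTransGen_of_subset (subset_imageMV hx') hp hq
  | head hcd _ ih =>
    obtain ⟨hadj, hc, hd⟩ := hcd
    obtain ⟨r, hr, hpr⟩ := (hstrong _ _ hadj).1 p hp
    rcases hpr with rfl | hpr
    · exact ih hr
    · exact (ih hr).head ⟨hpr, subset_imageMV hc hp, subset_imageMV hd hr⟩

theorem strong_cont_connected_images_implies_connectivity_preserving_general
    {X Y : Type*} (adjX : X → X → Prop) (adjY : Y → Y → Prop)
    (F : X → Set Y)
    (hstrong : StrongCont adjX adjY F)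
    (hconn : ∀ x, ConnIn adjY (F x)) :
    ConnPres adjX adjY F := by
  intro A hA a ha b hb
  obtain ⟨x, hx, hax⟩ := mem_imageMV.1 ha
  obtain ⟨x', hx', hbx'⟩ := mem_imageMV.1 hb
  exact hstrong.reflTransGen_imageMV hconn (hA x hx x' hx') hx' hax hbx'

theorem strong_cont_connected_images_implies_connectivity_preserving
    {X Y : Type*} (adjX : X → X → Prop) (adjY : Y → Y → Prop)
    (hsymX : ∀ a b, adjX a b → adjX b a) (hirrX : ∀ a, ¬ adjX a a)
    (hsymY : ∀ a b, adjY a b → adjY b a) (hirrY : ∀ a, ¬ adjY a a)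
    (F : X → Set Y) (hne : ∀ x, (F x).Nonempty)
    (hstrong : StrongCont adjX adjY F)
    (hconn : ∀ x, ConnIn adjY (F x)) :
    ConnPres adjX adjY F :=
  strong_cont_connected_images_implies_connectivity_preserving_general adjX adjY F hstrong hconn
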